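/- arXiv:1810.06607 — 4 statements merged into one kernel-verified Lean document; each statement's English description precedes it below -/
import Mathlib

section
/- Let Z = {P₁,…,P₉} ⊂ ℂ³ \ {0} be the B₃ configuration with representatives P₁=(1,0,0), P₂=(0,1,0), P₃=(0,0,1), P₄=(1,1,0), P₅=(1,−1,0), P₆=(1,0,1), P₇=(1,0,−1), P₈=(0,1,1), P₉=(0,1,−1). Then the ℂ-vector space of homogeneous polynomials of degree 4 in ℂ[x,y,z] vanishing at all nine points Pᵢ is exactly the 6-dimensional span of the six quartics x²yz, xy²z, xyz², xy(x²−y²), xz(x²−z²), yz(y²−z²). In particular the nine points impose independent conditions on quartics. -/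
open MvPolynomial

/-- The nine points of the B₃ configuration in ℂ³. -/
noncomputable def B3points : Fin 9 → (Fin 3 → ℂ) :=
  ![![1, 0, 0], ![0, 1, 0], ![0, 0, 1],
    ![1, 1, 0], ![1, -1, 0], ![1, 0, 1],
    ![1, 0, -1], ![0, 1, 1], ![0, 1, -1]]

/-- The six quartics x²yz, xy²z, xyz², xy(x²−y²), xz(x²−z²), yz(y²−z²). -/
noncomputable def B3quartics : Fin 6 → MvPolynomial (Fin 3) ℂ :=
  ![X 0 ^ 2 * X 1 * X 2,
    X 0 * X 1 ^ 2 * X 2,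
    X 0 * X 1 * X 2 ^ 2,
    X 0 * X 1 * (X 0 ^ 2 - X 1 ^ 2),
    X 0 * X 2 * (X 0 ^ 2 - X 2 ^ 2),
    X 1 * X 2 * (X 1 ^ 2 - X 2 ^ 2)]


/-!
A quartic form `F = ∑ a_{ijk} x^i y^j z^k` is determined by its fifteen coefficients. Vanishing
at the coordinate points kills `a₄₀₀, a₀₄₀, a₀₀₄`. On the line `z = 0` the values at `(1, ±1, 0)`
are `a₂₂₀ ± (a₃₁₀ + a₁₃₀)` (once `a₄₀₀ = a₀₄₀ = 0`), so `a₂₂₀ = 0` and `a₁₃₀ = -a₃₁₀`; likewise on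
the other two coordinate lines. What remains free are the coefficients of `x²yz, xy²z, xyz², x³y,
x³z, y³z`, and each of these monomials occurs in exactly one of the six quartics, with coefficient
`1`: this gives both spanning and linear independence.
-/

namespace MvPolynomial

noncomputable def expVec (a b c : ℕ) : Fin 3 →₀ ℕ :=
  Finsupp.single 0 a + Finsupp.single 1 b + Finsupp.single 2 c

@[simp] lemma expVec_zero (a b c : ℕ) : expVec a b c 0 = a := by simp [expVec]
@[simp] lemma expVec_one (a b c : ℕ) : expVec a b c 1 = b := by simp [expVec]
@[simp] lemma expVec_two (a b c : ℕ) : expVec a b c 2 = c := by simp [expVec]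

lemma expVec_eq_iff {a b c : ℕ} {m : Fin 3 →₀ ℕ} :
    expVec a b c = m ↔ a = m 0 ∧ b = m 1 ∧ c = m 2 := by
  refine ⟨by rintro rfl; simp, fun h => ?_⟩
  ext i
  fin_cases i <;> simp [h]

lemma _root_.Finsupp.degree_fin_three (m : Fin 3 →₀ ℕ) : m.degree = m 0 + m 1 + m 2 := by
  rw [Finsupp.degree_eq_sum, Fin.sum_univ_three]

lemma monomial_expVec {R : Type*} [CommSemiring R] (a b c : ℕ) (k : R) :
    monomial (expVec a b c) k = C k * X 0 ^ a * X 1 ^ b * X 2 ^ c := by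
  simp only [expVec, X_pow_eq_monomial, C_mul_monomial, monomial_mul, mul_one]

theorem IsHomogeneous.eq_sum_monomial_expVec {R : Type*} [CommSemiring R]
    {F : MvPolynomial (Fin 3) R} {n : ℕ} (hF : F.IsHomogeneous n) :
    F = ∑ a ∈ Finset.range (n + 1), ∑ b ∈ Finset.range (n + 1 - a),
      monomial (expVec a b (n - a - b)) (coeff (expVec a b (n - a - b)) F) := by
  ext m
  simp only [coeff_sum, coeff_monomial, expVec_eq_iff]
  by_cases hm : m 0 + m 1 + m 2 = n
  · have hm2 : n - m 0 - m 1 = m 2 := by omega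
    rw [Finset.sum_eq_single (m 0), Finset.sum_eq_single (m 1), if_pos ⟨rfl, rfl, hm2⟩, hm2,
      expVec_eq_iff.2 ⟨rfl, rfl, rfl⟩]
    · exact fun b _ hb => if_neg (by tauto)
    · simp only [Finset.mem_range]; omega
    · exact fun a _ ha => Finset.sum_eq_zero fun b _ => if_neg (by tauto)
    · simp only [Finset.mem_range]; omega
  · rw [hF.coeff_eq_zero (by rwa [Finsupp.degree_fin_three]), eq_comm]
    refine Finset.sum_eq_zero fun a ha => Finset.sum_eq_zero fun b hb => if_neg ?_
    simp only [Finset.mem_range] at ha hb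
    omega

def vanishingForms {σ R ι : Type*} [CommSemiring R] (n : ℕ) (Z : ι → σ → R) :
    Submodule R (MvPolynomial σ R) where
  carrier := {F | F.IsHomogeneous n ∧ ∀ i, eval (Z i) F = 0}
  add_mem' hF hG := ⟨hF.1.add hG.1, fun i => by simp [hF.2 i, hG.2 i]⟩
  zero_mem' := ⟨isHomogeneous_zero _ _ _, fun _ => map_zero _⟩
  smul_mem' c F hF := ⟨by rw [smul_eq_C_mul]; exact hF.1.C_mul c, fun i => by simp [hF.2 i]⟩

end MvPolynomial

lemma B3quartics_eq_monomials : B3quartics =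
    ![monomial (expVec 2 1 1) 1, monomial (expVec 1 2 1) 1, monomial (expVec 1 1 2) 1,
      monomial (expVec 3 1 0) 1 - monomial (expVec 1 3 0) 1,
      monomial (expVec 3 0 1) 1 - monomial (expVec 1 0 3) 1,
      monomial (expVec 0 3 1) 1 - monomial (expVec 0 1 3) 1] := by
  ext1 j
  fin_cases j <;> simp [B3quartics, monomial_expVec] <;> ring

lemma isHomogeneous_B3quartics (j : Fin 6) : (B3quartics j).IsHomogeneous 4 := by
  have h : ∀ a b c, a + b + c = 4 → (monomial (expVec a b c) (1 : ℂ)).IsHomogeneous 4 :=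
    fun a b c habc => isHomogeneous_monomial _ (by simpa [Finsupp.degree_fin_three] using habc)
  rw [B3quartics_eq_monomials]
  fin_cases j <;> simp only [Fin.zero_eta, Fin.mk_one, Fin.reduceFinMk, Matrix.cons_val] <;>
    first | exact h _ _ _ rfl | exact (h _ _ _ rfl).sub (h _ _ _ rfl)

lemma eval_B3points_B3quartics (i : Fin 9) (j : Fin 6) :
    eval (B3points i) (B3quartics j) = 0 := by
  fin_cases i <;> fin_cases j <;> simp [B3points, B3quartics]

theorem linearIndependent_B3quartics : LinearIndependent ℂ B3quartics := by
  let lead : Fin 6 → Fin 3 →₀ ℕ :=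
    ![expVec 2 1 1, expVec 1 2 1, expVec 1 1 2, expVec 3 1 0, expVec 3 0 1, expVec 0 3 1]
  let leadCoeffs := LinearMap.pi fun j => lcoeff ℂ (lead j)
  have h : leadCoeffs ∘ B3quartics = fun i => Pi.single i 1 := by
    funext i j
    fin_cases i <;> fin_cases j <;>
      simp [leadCoeffs, lead, B3quartics_eq_monomials, coeff_monomial, expVec_eq_iff]
  exact .of_comp leadCoeffs (h ▸ Pi.linearIndependent_single_one (Fin 6) ℂ)

theorem vanishingForms_B3points_le_span :
    vanishingForms 4 B3points ≤ Submodule.span ℂ (Set.range B3quartics) := by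
  rintro F ⟨hF, hZ⟩
  have hdec := hF.eq_sum_monomial_expVec
  simp only [Finset.sum_range_succ, Finset.sum_range_zero, zero_add, Nat.reduceAdd,
    Nat.reduceSub, monomial_expVec] at hdec
  rw [hdec] at hZ
  simp only [Fin.forall_fin_succ, B3points, map_add, map_mul, map_pow, eval_C, eval_X,
    Matrix.cons_val', Matrix.cons_val, Matrix.cons_val_fin_one, Matrix.cons_val_one,
    Matrix.cons_val_zero, Matrix.cons_val_succ] at hZ
  norm_num at hZ
  obtain ⟨h400, h040, h004, hxy, hxy', hxz, hxz', hyz, hyz'⟩ := hZ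
  have h220 : coeff (expVec 2 2 0) F = 0 := by linear_combination (hxy + hxy') / 2 - h400 - h040
  have h202 : coeff (expVec 2 0 2) F = 0 := by linear_combination (hxz + hxz') / 2 - h400 - h004
  have h022 : coeff (expVec 0 2 2) F = 0 := by linear_combination (hyz + hyz') / 2 - h040 - h004
  have h130 : coeff (expVec 1 3 0) F = -coeff (expVec 3 1 0) F := by
    linear_combination (hxy - hxy') / 2
  have h103 : coeff (expVec 1 0 3) F = -coeff (expVec 3 0 1) F := by
    linear_combination (hxz - hxz') / 2
  have h013 : coeff (expVec 0 1 3) F = -coeff (expVec 0 3 1) F := by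
    linear_combination (hyz - hyz') / 2
  rw [Submodule.mem_span_range_iff_exists_fun]
  refine ⟨![coeff (expVec 2 1 1) F, coeff (expVec 1 2 1) F, coeff (expVec 1 1 2) F,
    coeff (expVec 3 1 0) F, coeff (expVec 3 0 1) F, coeff (expVec 0 3 1) F], ?_⟩
  conv_rhs => rw [hdec, h400, h040, h004, h220, h202, h022, h130, h103, h013]
  simp only [Fin.sum_univ_six, B3quartics, smul_eq_C_mul, Matrix.cons_val_zero,
    Matrix.cons_val_one, Matrix.cons_val, C_0, C_neg]
  ring

theorem vanishingForms_B3points_eq_span :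
    vanishingForms 4 B3points = Submodule.span ℂ (Set.range B3quartics) :=
  le_antisymm vanishingForms_B3points_le_span <| Submodule.span_le.2 <| Set.range_subset_iff.2
    fun j => ⟨isHomogeneous_B3quartics j, fun i => eval_B3points_B3quartics i j⟩

/-- The space of quartics in ℂ[x,y,z] vanishing at the nine points of the B₃
configuration is exactly the 6-dimensional span of the six listed quartics;
in particular the nine points impose independent conditions on quartics. -/
theorem b3_quartics_through_Z :
    LinearIndependent ℂ B3quartics ∧
    {F : MvPolynomial (Fin 3) ℂ |
        F.IsHomogeneous 4 ∧ ∀ i : Fin 9, eval (B3points i) F = 0}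
      = (↑(Submodule.span ℂ (Set.range B3quartics)) :
          Set (MvPolynomial (Fin 3) ℂ)) :=
  ⟨linearIndependent_B3quartics, congrArg SetLike.coe vanishingForms_B3points_eq_span⟩
end

section
/- Let q₁ = x²yz, q₂ = xy²z, q₃ = xyz², q₄ = xy(x²−y²), q₅ = xz(x²−z²), q₆ = yz(y²−z²) in ℂ[x,y,z], and for (a,b,c) ∈ ℂ³ let H(a,b,c) be the 6×6 matrix whose (i,j)-entry is the second-order partial derivative of qᵢ with respect to the j-th of the six pairs (x,x), (y,y), (z,z), (x,y), (x,z), (y,z), evaluated at (a,b,c). Then det H(a,b,c) = 0 for all (a,b,c) ∈ ℂ³. (Thus the B₃ surface X_{B₃} ⊂ ℙ⁵, the image of ℙ² under (x:y:z) ↦ (q₁:…:q₆), satisfies at least one Laplace equation of order 2.) -/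
open MvPolynomial

/-- The six unordered pairs of variables (x,x),(y,y),(z,z),(x,y),(x,z),(y,z). -/
def varPairs : Fin 6 → Fin 3 × Fin 3 :=
  ![(0, 0), (1, 1), (2, 2), (0, 1), (0, 2), (1, 2)]

/-- The 6×6 matrix of all second-order partial derivatives of the six B₃
quartics, evaluated at a point of ℂ³. -/
noncomputable def B3Hessian (v : Fin 3 → ℂ) : Matrix (Fin 6) (Fin 6) ℂ :=
  Matrix.of fun i j =>
    eval v (pderiv (varPairs j).1 (pderiv (varPairs j).2 (B3quartics i)))

lemma pderiv_ofNat (i : Fin 3) (n : ℕ) [n.AtLeastTwo] :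
    pderiv i (OfNat.ofNat n : MvPolynomial (Fin 3) ℂ) = 0 := by
  rw [← map_ofNat (C : ℂ →+* MvPolynomial (Fin 3) ℂ) n]
  exact pderiv_C

lemma pderiv_two (i : Fin 3) : pderiv i (2 : MvPolynomial (Fin 3) ℂ) = 0 := pderiv_ofNat i 2

lemma pderiv_three (i : Fin 3) : pderiv i (3 : MvPolynomial (Fin 3) ℂ) = 0 := pderiv_ofNat i 3

lemma cons_val_five {α : Type*} {m : ℕ} (x : α) (u : Fin (m + 5) → α) :
    Matrix.vecCons x u 5 =
      Matrix.vecHead (Matrix.vecTail (Matrix.vecTail (Matrix.vecTail (Matrix.vecTail u)))) := rfl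

set_option maxHeartbeats 2000000 in
set_option maxRecDepth 20000 in
/-- The determinant of the matrix of second-order partials of the six quartics
defining the B₃ surface vanishes identically: the B₃ surface satisfies at least
one Laplace equation of order 2. -/
theorem b3_hessian_det_zero (a b c : ℂ) : (B3Hessian ![a, b, c]).det = 0 := by
  have h : B3Hessian ![a, b, c] =
      !![2*b*c, 0, 0, 2*a*c, 2*a*b, a^2;
         0, 2*a*c, 0, 2*b*c, b^2, 2*a*b;
         0, 0, 2*a*b, c^2, 2*b*c, 2*a*c;
         6*a*b, -(6*a*b), 0, 3*a^2-3*b^2, 0, 0;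
         6*a*c, 0, -(6*a*c), 0, 3*a^2-3*c^2, 0;
         0, 6*b*c, -(6*b*c), 0, 0, 3*b^2-3*c^2] := by
    ext i j
    fin_cases i <;> fin_cases j <;>
      simp [B3Hessian, B3quartics, varPairs, Matrix.cons_val_zero', Matrix.cons_val_succ',
        pderiv_X, pderiv_two, pderiv_three, cons_val_five, Derivation.leibniz,
        Derivation.leibniz_pow, Pi.single_apply] <;> first
        | rfl
        | ring
  rw [h]
  by_cases h0 : a = 0 ∧ b = 0 ∧ c = 0
  · obtain ⟨rfl, rfl, rfl⟩ := h0
    norm_num [Matrix.det_fin_three]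
    exact Matrix.det_eq_zero_of_row_eq_zero 0 (by intro j; fin_cases j <;> norm_num)
  · rw [← Matrix.exists_vecMul_eq_zero_iff]
    refine ⟨![3*a*(b^2-c^2), 3*b*(c^2-a^2), 3*c*(a^2-b^2), c^3, -(b^3), a^3], ?_, ?_⟩
    · intro hv
      refine h0 ⟨?_, ?_, ?_⟩
      · have := congrFun hv 5
        simpa [cons_val_five, Matrix.vecHead, Matrix.vecTail, pow_eq_zero_iff] using this
      · have := congrFun hv 4
        simpa [Matrix.vecHead, Matrix.vecTail, pow_eq_zero_iff, neg_eq_zero] using this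
      · have := congrFun hv 3
        simpa [Matrix.vecHead, Matrix.vecTail, pow_eq_zero_iff] using this
    · funext j
      fin_cases j <;>
        simp [Matrix.vecMul, dotProduct, Fin.sum_univ_six, cons_val_five,
          Matrix.vecHead, Matrix.vecTail] <;> ring
end

section
/- Let q₁ = x²yz, q₂ = xy²z, q₃ = xyz², q₄ = xy(x²−y²), q₅ = xz(x²−z²), q₆ = yz(y²−z²) in ℂ[x,y,z], and let H(a,b,c) be the 6×6 matrix of all second-order partial derivatives of q₁,…,q₆ (columns indexed by the pairs (x,x),(y,y),(z,z),(x,y),(x,z),(y,z)) evaluated at (a,b,c). Then for every (a,b,c) ∈ ℂ³ \ {0} the matrix H(a,b,c) has rank at least 3, and at each of the three coordinate points (1,0,0), (0,1,0), (0,0,1) its rank is exactly 3. -/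
open MvPolynomial

/-!
If two coordinates of `(a, b, c)`, say `a` and `b`, are nonzero, a 3×3 minor of the Hessian
matrix equals `18 a³ b³`; if only `a` is nonzero, the minor `9 a² (a² - b²) (a² - c²)` equals
`9 a⁶`. On the coordinate axes the three columns of pure second derivatives vanish, because no
quartic contains a monomial `xᵢ⁴` or `xᵢ² xⱼ²`, so the rank is at most 3 there.
-/

lemma B3Hessian_eq (a b c : ℂ) : B3Hessian ![a, b, c] =
    !![2*b*c, 0, 0, 2*a*c, 2*a*b, a^2;
       0, 2*a*c, 0, 2*b*c, b^2, 2*a*b;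
       0, 0, 2*a*b, c^2, 2*b*c, 2*a*c;
       6*a*b, -(6*a*b), 0, 3*a^2-3*b^2, 0, 0;
       6*a*c, 0, -(6*a*c), 0, 3*a^2-3*c^2, 0;
       0, 6*b*c, -(6*b*c), 0, 0, 3*b^2-3*c^2] := by
  ext i j
  fin_cases i <;> fin_cases j <;>
    simp only [B3Hessian, B3quartics, varPairs, pow_two, Matrix.of_apply, Matrix.cons_val,
      Matrix.cons_val', Matrix.cons_val_zero, Matrix.cons_val_one, Matrix.cons_val_fin_one,
      Derivation.leibniz, map_add, map_sub, map_mul, map_zero, map_one,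
      Derivation.map_one_eq_zero, pderiv_X, Pi.single_apply, smul_eq_mul, eval_X,
      Fin.isValue, Fin.reduceEq, Fin.reduceFinMk, if_true, if_false] <;> ring

theorem Matrix.card_le_rank_of_det_submatrix_ne_zero {m n k R : Type*} [Fintype n] [Fintype k]
    [DecidableEq k] [CommRing R] [IsDomain R] (A : Matrix m n R) (r : k → m) (c : k → n)
    (h : (A.submatrix r c).det ≠ 0) : Fintype.card k ≤ A.rank :=
  (Matrix.rank_of_det_ne_zero h).symm.trans_le (A.rank_submatrix_le r c)

theorem Matrix.rank_le_card_of_col_support_subset {m n R : Type*} [Fintype m] [Fintype n]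
    [Field R] (A : Matrix m n R) (s : Finset n) (hz : Function.support A.col ⊆ s) :
    A.rank ≤ s.card :=
  A.rank_transpose.symm.trans_le (Matrix.rank_le_card_of_support_subset A.transpose s hz)

section minors

variable (a b c : ℂ)

lemma det_B3Hessian_submatrix_xy :
    ((B3Hessian ![a, b, c]).submatrix ![3, 0, 1] ![0, 4, 5]).det = 18 * a ^ 3 * b ^ 3 := by
  rw [B3Hessian_eq, Matrix.det_fin_three]
  simp only [Matrix.submatrix_apply, Matrix.of_apply, Matrix.cons_val', Matrix.cons_val,
    Matrix.cons_val_zero, Matrix.cons_val_one, Matrix.cons_val_fin_one]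
  ring

lemma det_B3Hessian_submatrix_xz :
    ((B3Hessian ![a, b, c]).submatrix ![4, 0, 2] ![0, 3, 5]).det = 18 * a ^ 3 * c ^ 3 := by
  rw [B3Hessian_eq, Matrix.det_fin_three]
  simp only [Matrix.submatrix_apply, Matrix.of_apply, Matrix.cons_val', Matrix.cons_val,
    Matrix.cons_val_zero, Matrix.cons_val_one, Matrix.cons_val_fin_one]
  ring

lemma det_B3Hessian_submatrix_yz :
    ((B3Hessian ![a, b, c]).submatrix ![5, 1, 2] ![1, 3, 4]).det = 18 * b ^ 3 * c ^ 3 := by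
  rw [B3Hessian_eq, Matrix.det_fin_three]
  simp only [Matrix.submatrix_apply, Matrix.of_apply, Matrix.cons_val', Matrix.cons_val,
    Matrix.cons_val_zero, Matrix.cons_val_one, Matrix.cons_val_fin_one]
  ring

lemma det_B3Hessian_submatrix_x :
    ((B3Hessian ![a, b, c]).submatrix ![0, 3, 4] ![5, 3, 4]).det =
      9 * a ^ 2 * (a ^ 2 - b ^ 2) * (a ^ 2 - c ^ 2) := by
  rw [B3Hessian_eq, Matrix.det_fin_three]
  simp only [Matrix.submatrix_apply, Matrix.of_apply, Matrix.cons_val', Matrix.cons_val,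
    Matrix.cons_val_zero, Matrix.cons_val_one, Matrix.cons_val_fin_one]
  ring

lemma det_B3Hessian_submatrix_y :
    ((B3Hessian ![a, b, c]).submatrix ![1, 3, 5] ![4, 3, 5]).det =
      9 * b ^ 2 * (a ^ 2 - b ^ 2) * (b ^ 2 - c ^ 2) := by
  rw [B3Hessian_eq, Matrix.det_fin_three]
  simp only [Matrix.submatrix_apply, Matrix.of_apply, Matrix.cons_val', Matrix.cons_val,
    Matrix.cons_val_zero, Matrix.cons_val_one, Matrix.cons_val_fin_one]
  ring

lemma det_B3Hessian_submatrix_z :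
    ((B3Hessian ![a, b, c]).submatrix ![2, 4, 5] ![3, 4, 5]).det =
      9 * c ^ 2 * (a ^ 2 - c ^ 2) * (b ^ 2 - c ^ 2) := by
  rw [B3Hessian_eq, Matrix.det_fin_three]
  simp only [Matrix.submatrix_apply, Matrix.of_apply, Matrix.cons_val', Matrix.cons_val,
    Matrix.cons_val_zero, Matrix.cons_val_one, Matrix.cons_val_fin_one]
  ring

end minors

theorem three_le_rank_B3Hessian {a b c : ℂ} (h : ![a, b, c] ≠ 0) :
    3 ≤ (B3Hessian ![a, b, c]).rank := by
  have of_minor (r s : Fin 3 → Fin 6) (hrs : ((B3Hessian ![a, b, c]).submatrix r s).det ≠ 0) :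
      3 ≤ (B3Hessian ![a, b, c]).rank := by
    simpa using (B3Hessian ![a, b, c]).card_le_rank_of_det_submatrix_ne_zero r s hrs
  by_cases hab : a ≠ 0 ∧ b ≠ 0
  · exact of_minor _ _ (by rw [det_B3Hessian_submatrix_xy]; simp [hab])
  by_cases hac : a ≠ 0 ∧ c ≠ 0
  · exact of_minor _ _ (by rw [det_B3Hessian_submatrix_xz]; simp [hac])
  by_cases hbc : b ≠ 0 ∧ c ≠ 0
  · exact of_minor _ _ (by rw [det_B3Hessian_submatrix_yz]; simp [hbc])
  have : a ≠ 0 ∨ b ≠ 0 ∨ c ≠ 0 := by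
    contrapose! h
    simp [h.1, h.2.1, h.2.2]
  rcases this with ha | hb | hc
  · exact of_minor _ _ (by rw [det_B3Hessian_submatrix_x]; simp_all)
  · exact of_minor _ _ (by rw [det_B3Hessian_submatrix_y]; simp_all)
  · exact of_minor _ _ (by rw [det_B3Hessian_submatrix_z]; simp_all)

theorem rank_B3Hessian_le_three {a b c : ℂ} (hab : a * b = 0) (hac : a * c = 0) (hbc : b * c = 0) :
    (B3Hessian ![a, b, c]).rank ≤ 3 := by
  refine Matrix.rank_le_card_of_col_support_subset _ {3, 4, 5} ?_
  refine Function.support_subset_iff'.2 fun j hj => funext fun i => ?_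
  fin_cases j <;> fin_cases i <;> simp_all [B3Hessian_eq, mul_assoc]

/-- At every nonzero point of ℂ³ the matrix of second-order partials of the six
B₃ quartics has rank at least 3, and at each of the three coordinate points its
rank is exactly 3. -/
theorem b3_hessian_rank_at_least_three :
    (∀ a b c : ℂ, ![a, b, c] ≠ 0 → 3 ≤ (B3Hessian ![a, b, c]).rank) ∧
    (B3Hessian ![1, 0, 0]).rank = 3 ∧
    (B3Hessian ![0, 1, 0]).rank = 3 ∧
    (B3Hessian ![0, 0, 1]).rank = 3 := by
  refine ⟨fun a b c => three_le_rank_B3Hessian, ?_, ?_, ?_⟩ <;>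
    exact le_antisymm (rank_B3Hessian_le_three (by simp) (by simp) (by simp))
      (three_le_rank_B3Hessian (by simp))
end

section
/- Let φ : ℂ³ → ℂ⁶ be given by φ(x,y,z) = (x²y, x²z, xy², y²z, xz², yz²) (the Togliatti parametrization, coordinates u₀,…,u₅ corresponding to x²y, x²z, y²x, y²z, z²x, z²y). Then the vanishing ideal in ℂ[u₀,…,u₅] of the image set {φ(x,y,z) : (x,y,z) ∈ ℂ³} ⊆ ℂ⁶ (equivalently, the homogeneous ideal I(X_T) of the affine cone over the Togliatti surface X_T ⊂ ℙ⁵) is generated by the nine polynomials u₂u₄ − u₀u₅, u₁u₃ − u₀u₅, u₃u₄² − u₁u₅², u₀u₄² − u₁²u₅, u₃²u₄ − u₂u₅², u₀u₃u₄ − u₁u₂u₅, u₀u₃² − u₂²u₅, u₁u₂² − u₀²u₃, u₁²u₂ − u₀²u₄. -/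
/-!
The map u ↦ (x²y, x²z, xy², y²z, xz², yz²) of coordinate rings is the monomial map with exponent
map A, and since ℂ is infinite, F vanishes on the image of φ iff F lies in its kernel. Each of the
nine binomials u^p - u^q has A p = A q, and orienting it as the rewrite rule u^p → u^q lowers the
weight 2a₂ + 3a₃ + a₄ of the exponent vector a. Hence modulo the nine binomials every polynomial
is congruent to a combination of standard monomials, those divisible by no u^p. A finite case
analysis shows that A is injective on standard exponents, so such a combination lying in the
kernel is zero.
-/

open MvPolynomial

/-- The affine Togliatti parametrization φ(x,y,z) = (x²y, x²z, xy², y²z, xz², yz²). -/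
noncomputable def phiTogliatti (x y z : ℂ) : Fin 6 → ℂ :=
  ![x ^ 2 * y, x ^ 2 * z, x * y ^ 2, y ^ 2 * z, x * z ^ 2, y * z ^ 2]

namespace MvPolynomial

variable {R σ τ : Type*} [CommRing R]

noncomputable def binomialIdeal (B : Set ((σ →₀ ℕ) × (σ →₀ ℕ))) : Ideal (MvPolynomial σ R) :=
  Ideal.span ((fun b => monomial b.1 1 - monomial b.2 1) '' B)

def standardExponents (B : Set ((σ →₀ ℕ) × (σ →₀ ℕ))) : Set (σ →₀ ℕ) :=
  {w | ∀ b ∈ B, ¬ b.1 ≤ w}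

noncomputable def monomialMap (f : (σ →₀ ℕ) →+ (τ →₀ ℕ)) :
    MvPolynomial σ R →+* MvPolynomial τ R :=
  AddMonoidAlgebra.mapDomainRingHom R f

theorem monomialMap_monomial (f : (σ →₀ ℕ) →+ (τ →₀ ℕ)) (v : σ →₀ ℕ) (c : R) :
    monomialMap f (monomial v c) = monomial (f v) c :=
  AddMonoidAlgebra.mapDomain_single

theorem binomialIdeal_le_ker_monomialMap {f : (σ →₀ ℕ) →+ (τ →₀ ℕ)}
    {B : Set ((σ →₀ ℕ) × (σ →₀ ℕ))} (hf : ∀ b ∈ B, f b.1 = f b.2) :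
    binomialIdeal B ≤ RingHom.ker (monomialMap f : MvPolynomial σ R →+* _) := by
  rw [binomialIdeal, Ideal.span_le]
  rintro _ ⟨b, hb, rfl⟩
  simp [RingHom.mem_ker, monomialMap_monomial, hf b hb]

theorem exists_mem_standardExponents_monomial_sub_mem (B : Set ((σ →₀ ℕ) × (σ →₀ ℕ)))
    (μ : (σ →₀ ℕ) →+ ℕ) (hμ : ∀ b ∈ B, μ b.2 < μ b.1) (v : σ →₀ ℕ) :
    ∃ w ∈ standardExponents B,
      (monomial v 1 - monomial w 1 : MvPolynomial σ R) ∈ binomialIdeal B := by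
  induction hv : μ v using Nat.strong_induction_on generalizing v with
  | _ n ih =>
    by_cases hstd : v ∈ standardExponents B
    · exact ⟨v, hstd, by simp⟩
    obtain ⟨b, hb, hbv⟩ : ∃ b ∈ B, b.1 ≤ v := by simpa [standardExponents] using hstd
    have hsplit : v - b.1 + b.1 = v := tsub_add_cancel_of_le hbv
    have hlt : μ (v - b.1 + b.2) < n := by
      rw [← hv, map_add]
      calc μ (v - b.1) + μ b.2 < μ (v - b.1) + μ b.1 := Nat.add_lt_add_left (hμ b hb) _
        _ = μ v := by rw [← map_add, hsplit]
    obtain ⟨w, hw, hmem⟩ := ih _ hlt _ rfl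
    refine ⟨w, hw, ?_⟩
    have hstep : (monomial v 1 - monomial (v - b.1 + b.2) 1 : MvPolynomial σ R) =
        monomial (v - b.1) 1 * (monomial b.1 1 - monomial b.2 1) := by
      rw [mul_sub, monomial_mul, monomial_mul, one_mul, hsplit]
    rw [← sub_add_sub_cancel _ (monomial (v - b.1 + b.2) 1), hstep]
    exact add_mem (Ideal.mul_mem_left _ _ (Ideal.subset_span ⟨b, hb, rfl⟩)) hmem

theorem exists_support_subset_standardExponents_sub_mem (B : Set ((σ →₀ ℕ) × (σ →₀ ℕ)))
    (μ : (σ →₀ ℕ) →+ ℕ) (hμ : ∀ b ∈ B, μ b.2 < μ b.1) (F : MvPolynomial σ R) :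
    ∃ G : MvPolynomial σ R, ↑G.support ⊆ standardExponents B ∧ F - G ∈ binomialIdeal B := by
  induction F using MvPolynomial.induction_on' with
  | monomial v c =>
    obtain ⟨w, hw, hmem⟩ := exists_mem_standardExponents_monomial_sub_mem (R := R) B μ hμ v
    refine ⟨monomial w c,
      (Finset.coe_subset.2 support_monomial_subset).trans (by simpa using hw), ?_⟩
    have hC : monomial v c - monomial w c =
        C c * (monomial v 1 - monomial w 1 : MvPolynomial σ R) := by
      rw [mul_sub, C_mul_monomial, C_mul_monomial, mul_one]
    rw [hC]
    exact Ideal.mul_mem_left _ _ hmem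
  | add F₁ F₂ ih₁ ih₂ =>
    obtain ⟨G₁, hG₁, h₁⟩ := ih₁
    obtain ⟨G₂, hG₂, h₂⟩ := ih₂
    refine ⟨G₁ + G₂, ?_, by simpa [add_sub_add_comm] using add_mem h₁ h₂⟩
    classical
    exact (Finset.coe_subset.2 support_add).trans (by simpa using Set.union_subset hG₁ hG₂)

theorem ker_monomialMap_eq_binomialIdeal (f : (σ →₀ ℕ) →+ (τ →₀ ℕ))
    (B : Set ((σ →₀ ℕ) × (σ →₀ ℕ))) (μ : (σ →₀ ℕ) →+ ℕ)
    (hf : ∀ b ∈ B, f b.1 = f b.2) (hμ : ∀ b ∈ B, μ b.2 < μ b.1)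
    (hinj : Set.InjOn f (standardExponents B)) :
    RingHom.ker (monomialMap f : MvPolynomial σ R →+* _) = binomialIdeal B := by
  refine le_antisymm (fun F hF => ?_) (binomialIdeal_le_ker_monomialMap hf)
  obtain ⟨G, hG, hFG⟩ := exists_support_subset_standardExponents_sub_mem B μ hμ F
  have hG0 : G = 0 := by
    have hGker := RingHom.mem_ker.1 (binomialIdeal_le_ker_monomialMap hf hFG)
    rw [map_sub, RingHom.mem_ker.1 hF, zero_sub, neg_eq_zero] at hGker
    refine AddMonoidAlgebra.coeff_injective
      (Finsupp.mapDomain_injOn _ hinj hG (by simp) ?_)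
    rw [AddMonoidAlgebra.coeff_zero, Finsupp.mapDomain_zero]
    exact congrArg AddMonoidAlgebra.coeff hGker
  simpa [hG0] using hFG

end MvPolynomial

open Finsupp (single)

noncomputable def togliattiExponent : Fin 6 → Fin 3 →₀ ℕ :=
  ![single 0 2 + single 1 1, single 0 2 + single 2 1, single 0 1 + single 1 2,
    single 1 2 + single 2 1, single 0 1 + single 2 2, single 1 1 + single 2 2]

def togliattiRelations : Set ((Fin 6 →₀ ℕ) × (Fin 6 →₀ ℕ)) :=
  {(single 2 1 + single 4 1, single 0 1 + single 5 1),
   (single 1 1 + single 3 1, single 0 1 + single 5 1),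
   (single 3 1 + single 4 2, single 1 1 + single 5 2),
   (single 0 1 + single 4 2, single 1 2 + single 5 1),
   (single 3 2 + single 4 1, single 2 1 + single 5 2),
   (single 0 1 + single 3 1 + single 4 1, single 1 1 + single 2 1 + single 5 1),
   (single 0 1 + single 3 2, single 2 2 + single 5 1),
   (single 1 1 + single 2 2, single 0 2 + single 3 1),
   (single 1 2 + single 2 1, single 0 2 + single 4 1)}

theorem weight_togliattiExponent_apply (v : Fin 6 →₀ ℕ) :
    Finsupp.weight togliattiExponent v 0 = 2 * v 0 + 2 * v 1 + v 2 + v 4 ∧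
    Finsupp.weight togliattiExponent v 1 = v 0 + 2 * v 2 + 2 * v 3 + v 5 ∧
    Finsupp.weight togliattiExponent v 2 = v 1 + v 3 + 2 * v 4 + 2 * v 5 := by
  simp [Finsupp.weight_eq_sum, Fin.sum_univ_six, togliattiExponent]
  omega

theorem cases_of_mem_standardExponents_togliattiRelations {v : Fin 6 →₀ ℕ}
    (hv : v ∈ standardExponents togliattiRelations) :
    (v 3 = 0 ∧ v 4 = 0 ∧ (v 1 = 0 ∨ v 2 = 0 ∨ v 1 = 1 ∧ v 2 = 1)) ∨
    (v 3 = 0 ∧ v 2 = 0 ∧ (v 0 = 0 ∨ v 4 = 1)) ∨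
    (v 4 = 0 ∧ v 1 = 0 ∧ (v 0 = 0 ∨ v 3 = 1)) ∨
    (v 3 = 1 ∧ v 4 = 1 ∧ v 0 = 0 ∧ v 1 = 0 ∧ v 2 = 0) := by
  simp [standardExponents, togliattiRelations, Finsupp.le_def, Fin.forall_fin_succ] at hv
  obtain ⟨h24, h13, h34, h04, h33, h034, h03, h12, h11⟩ := hv
  rcases Nat.eq_zero_or_pos (v 3) with h3 | h3 <;> rcases Nat.eq_zero_or_pos (v 4) with h4 | h4
  · left; clear * - h3 h4 h12 h11; omega
  · right; left; clear * - h3 h4 h24 h04; omega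
  · right; right; left; clear * - h3 h4 h13 h03; omega
  · right; right; right; clear * - h3 h4 h24 h13 h34 h33 h034; omega

theorem injOn_weight_togliattiExponent :
    Set.InjOn (Finsupp.weight togliattiExponent) (standardExponents togliattiRelations) := by
  intro a ha b hb h
  have e0 := DFunLike.congr_fun h 0
  have e1 := DFunLike.congr_fun h 1
  have e2 := DFunLike.congr_fun h 2
  obtain ⟨a0, a1, a2⟩ := weight_togliattiExponent_apply a
  obtain ⟨b0, b1, b2⟩ := weight_togliattiExponent_apply b
  rw [a0, b0] at e0
  rw [a1, b1] at e1
  rw [a2, b2] at e2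
  have key : a 0 = b 0 ∧ a 1 = b 1 ∧ a 2 = b 2 ∧ a 3 = b 3 ∧ a 4 = b 4 ∧ a 5 = b 5 := by
    have ca := cases_of_mem_standardExponents_togliattiRelations ha
    have cb := cases_of_mem_standardExponents_togliattiRelations hb
    clear ha hb h a0 a1 a2 b0 b1 b2
    generalize a 0 = x0, a 1 = x1, a 2 = x2, a 3 = x3, a 4 = x4, a 5 = x5,
      b 0 = y0, b 1 = y1, b 2 = y2, b 3 = y3, b 4 = y4, b 5 = y5 at *
    rcases ca with ⟨_, _, _ | _ | _⟩ | ⟨_, _, _ | _⟩ | ⟨_, _, _ | _⟩ | _ <;>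
      rcases cb with ⟨_, _, _ | _ | _⟩ | ⟨_, _, _ | _⟩ | ⟨_, _, _ | _⟩ | _ <;>
      omega
  ext i
  fin_cases i <;> simp [key]

theorem togliattiRelations_weight_eq :
    ∀ b ∈ togliattiRelations,
      Finsupp.weight togliattiExponent b.1 = Finsupp.weight togliattiExponent b.2 := by
  simp only [togliattiRelations, Set.mem_insert_iff, Set.mem_singleton_iff]
  rintro b (rfl | rfl | rfl | rfl | rfl | rfl | rfl | rfl | rfl) <;>
    ext j <;> fin_cases j <;> simp [Finsupp.weight_single, togliattiExponent]

theorem togliattiRelations_weight_lt :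
    ∀ b ∈ togliattiRelations,
      Finsupp.weight ![0, 0, 2, 3, 1, 0] b.2 < Finsupp.weight ![0, 0, 2, 3, 1, 0] b.1 := by
  simp only [togliattiRelations, Set.mem_insert_iff, Set.mem_singleton_iff]
  rintro b (rfl | rfl | rfl | rfl | rfl | rfl | rfl | rfl | rfl) <;>
    simp [Finsupp.weight_single]

theorem span_togliattiGenerators_eq_binomialIdeal :
    Ideal.span
        ({X 2 * X 4 - X 0 * X 5,
          X 1 * X 3 - X 0 * X 5,
          X 3 * X 4 ^ 2 - X 1 * X 5 ^ 2,
          X 0 * X 4 ^ 2 - X 1 ^ 2 * X 5,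
          X 3 ^ 2 * X 4 - X 2 * X 5 ^ 2,
          X 0 * X 3 * X 4 - X 1 * X 2 * X 5,
          X 0 * X 3 ^ 2 - X 2 ^ 2 * X 5,
          X 1 * X 2 ^ 2 - X 0 ^ 2 * X 3,
          X 1 ^ 2 * X 2 - X 0 ^ 2 * X 4} :
          Set (MvPolynomial (Fin 6) ℂ)) = binomialIdeal togliattiRelations := by
  rw [binomialIdeal]
  congr 1
  simp [togliattiRelations, Set.image_insert_eq, X, monomial_mul, monomial_pow]

theorem eval_phiTogliatti (x y z : ℂ) (F : MvPolynomial (Fin 6) ℂ) :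
    eval (phiTogliatti x y z) F =
      eval ![x, y, z] (monomialMap (Finsupp.weight togliattiExponent) F) := by
  suffices eval (phiTogliatti x y z) =
      (eval ![x, y, z]).comp (monomialMap (Finsupp.weight togliattiExponent)) from
    RingHom.congr_fun this F
  ext i
  · simp [← monomial_zero', monomialMap_monomial, eval_monomial]
  · rw [RingHom.comp_apply, eval_X, X, monomialMap_monomial, Finsupp.weight_single, one_smul]
    fin_cases i <;> simp [togliattiExponent, phiTogliatti, eval_monomial, Fin.prod_univ_three,
      Finsupp.single_apply]

/-- The vanishing ideal of the image of φ : ℂ³ → ℂ⁶, i.e. the homogeneous ideal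
of the affine cone over the Togliatti surface X_T ⊂ ℙ⁵, is generated by the nine
polynomials u₂u₄ − u₀u₅, u₁u₃ − u₀u₅, u₃u₄² − u₁u₅², u₀u₄² − u₁²u₅,
u₃²u₄ − u₂u₅², u₀u₃u₄ − u₁u₂u₅, u₀u₃² − u₂²u₅, u₁u₂² − u₀²u₃, u₁²u₂ − u₀²u₄. -/
theorem togliatti_surface_ideal (F : MvPolynomial (Fin 6) ℂ) :
    (∀ x y z : ℂ, eval (phiTogliatti x y z) F = 0) ↔
      F ∈ Ideal.span
        ({X 2 * X 4 - X 0 * X 5,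
          X 1 * X 3 - X 0 * X 5,
          X 3 * X 4 ^ 2 - X 1 * X 5 ^ 2,
          X 0 * X 4 ^ 2 - X 1 ^ 2 * X 5,
          X 3 ^ 2 * X 4 - X 2 * X 5 ^ 2,
          X 0 * X 3 * X 4 - X 1 * X 2 * X 5,
          X 0 * X 3 ^ 2 - X 2 ^ 2 * X 5,
          X 1 * X 2 ^ 2 - X 0 ^ 2 * X 3,
          X 1 ^ 2 * X 2 - X 0 ^ 2 * X 4} :
          Set (MvPolynomial (Fin 6) ℂ)) := by
  rw [span_togliattiGenerators_eq_binomialIdeal,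
    ← ker_monomialMap_eq_binomialIdeal _ _ _ togliattiRelations_weight_eq
      togliattiRelations_weight_lt injOn_weight_togliattiExponent, RingHom.mem_ker]
  simp_rw [eval_phiTogliatti]
  refine ⟨fun h => MvPolynomial.funext fun p => ?_, fun h x y z => by rw [h, map_zero]⟩
  have hp : p = ![p 0, p 1, p 2] := by ext i; fin_cases i <;> rfl
  rw [hp, h, map_zero]
end
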